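/- arXiv:2310.13151 — 10 statements merged into one kernel-verified Lean document; each statement's English description precedes it below -/
import Mathlib

section
/- For every n ≥ 1 and every family of points p : Fin n → ℍ in the hyperbolic plane, there exists a unique point x ∈ ℍ minimizing the sum of squared distances to the pᵢ; that is, there is a unique x ∈ ℍ such that for all y ∈ ℍ, ∑ i, (dist x (p i))² ≤ ∑ i, (dist y (p i))². -/
/-!
The sum of squared distances is continuous and tends to infinity on the proper space `ℍ`, so it
attains its minimum. Uniqueness follows from the semi-parallelogram law: if `x ≠ x'` both
minimized it, the midpoint `m` of `x` and `x'` would satisfy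
`∑ d(m, pᵢ)² ≤ ∑ d(x, pᵢ)² - n d(x, x')² / 4`. In `ℍ` the law comes from the median
formula `cosh d(z, m) · cosh (d(x, y) / 2) = (cosh d(z, x) + cosh d(z, y)) / 2`, compared with
Apollonius' theorem through the convexity of `x ↦ cosh √x`.
-/

open scoped UpperHalfPlane
open Real Set Filter

theorem convexOn_of_hasSum_pow {f : ℝ → ℝ} {c : ℕ → ℝ} (hc : ∀ n, 0 ≤ c n)
    (hf : ∀ x, 0 ≤ x → HasSum (fun n ↦ c n * x ^ n) (f x)) : ConvexOn ℝ (Ici 0) f := by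
  refine ⟨convex_Ici 0, fun x hx y hy a b ha hb hab ↦ ?_⟩
  have hcomb : 0 ≤ a • x + b • y := (convex_Ici 0) hx hy ha hb hab
  refine hasSum_le (fun n ↦ ?_) (hf _ hcomb) (((hf x hx).mul_left a).add ((hf y hy).mul_left b))
  have := (convexOn_pow n).2 hx hy ha hb hab
  simp only [smul_eq_mul] at this ⊢
  nlinarith [hc n]

theorem convexOn_cosh_sqrt : ConvexOn ℝ (Ici 0) fun x ↦ cosh √x := by
  refine convexOn_of_hasSum_pow (c := fun n ↦ 1 / (2 * n).factorial) (fun n ↦ by positivity)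
    fun x hx ↦ ?_
  convert Real.hasSum_cosh √x using 2 with n
  rw [pow_mul, sq_sqrt hx, one_div_mul_eq_div]

theorem ConvexOn.map_add_map_le_of_mem_Icc {s : Set ℝ} {f : ℝ → ℝ} (hf : ConvexOn ℝ s f)
    {a b x y : ℝ} (ha : a ∈ s) (hb : b ∈ s) (hx : x ∈ Icc a b) (hxy : x + y = a + b) :
    f x + f y ≤ f a + f b := by
  rw [← segment_eq_Icc (hx.1.trans hx.2)] at hx
  obtain ⟨θ, θ', hθ, hθ', hθθ', rfl⟩ := hx
  have hy : y = θ' • a + θ • b := by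
    simp only [smul_eq_mul] at hxy ⊢
    linear_combination hxy - (a + b) * hθθ'
  have h₁ := hf.2 ha hb hθ hθ' hθθ'
  have h₂ := hf.2 ha hb hθ' hθ (by linarith)
  simp only [smul_eq_mul] at h₁ h₂
  rw [hy]
  linear_combination h₁ + h₂ + (f a + f b) * hθθ'

/-- `h` is the median formula of a hyperbolic triangle with sides `u`, `v`, `2 s` and median `t`;
the conclusion says that `t` is at most the Euclidean median given by Apollonius' theorem. -/
theorem sq_add_sq_le_of_cosh_mul_cosh_eq {u v s t : ℝ}
    (h : cosh t * cosh s = (cosh u + cosh v) / 2) (hs₁ : |u - v| ≤ 2 * s)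
    (hs₂ : 2 * s ≤ u + v) :
    t ^ 2 + s ^ 2 ≤ (u ^ 2 + v ^ 2) / 2 := by
  obtain ⟨A, B, rfl, rfl⟩ : ∃ A B, u = A + B ∧ v = A - B :=
    ⟨(u + v) / 2, (u - v) / 2, by ring, by ring⟩
  obtain ⟨hB₁, hB₂⟩ := abs_le.1 hs₁
  have hs : 0 ≤ s := by linarith
  have hBs : B ^ 2 ≤ s ^ 2 := sq_le_sq' (by linarith) (by linarith)
  have hsA : s ^ 2 ≤ A ^ 2 := sq_le_sq' (by linarith) (by linarith)
  -- `(s - τ, s + τ)` has the same sum of squares as `(A - B, A + B)` but is more spread out.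
  obtain ⟨τ, hτ, hτs⟩ : ∃ τ, 0 ≤ τ ∧ τ ^ 2 = A ^ 2 + B ^ 2 - s ^ 2 :=
    ⟨√(A ^ 2 + B ^ 2 - s ^ 2), sqrt_nonneg _, sq_sqrt (by linarith [sq_nonneg B])⟩
  have hAB : |A * B| ≤ s * τ := by
    refine abs_le_of_sq_le_sq ?_ (mul_nonneg hs hτ)
    nlinarith [mul_nonneg (sub_nonneg.2 hBs) (sub_nonneg.2 hsA)]
  have hu : (A + B) ^ 2 ∈ Icc ((s - τ) ^ 2) ((s + τ) ^ 2) := by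
    constructor <;> nlinarith [abs_le.1 hAB]
  have hcosh : cosh (A + B) + cosh (A - B) ≤ cosh (s - τ) + cosh (s + τ) := by
    have := convexOn_cosh_sqrt.map_add_map_le_of_mem_Icc (sq_nonneg (s - τ))
      (sq_nonneg (s + τ)) hu (y := (A - B) ^ 2) (by linear_combination -2 * hτs)
    simpa only [sqrt_sq_eq_abs, cosh_abs] using this
  have ht : cosh t ≤ cosh τ := by
    refine le_of_mul_le_mul_right ?_ (cosh_pos s)
    rw [h, mul_comm]
    linarith [cosh_add s τ, cosh_sub s τ]
  nlinarith [sq_le_sq.2 (cosh_le_cosh.1 ht)]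

/-- Bruhat–Tits' semi-parallelogram law, satisfied by every CAT(0) space. -/
def SemiParallelogramLaw (X : Type*) [PseudoMetricSpace X] : Prop :=
  ∀ x y : X, ∃ m : X, ∀ z : X,
    dist m z ^ 2 + dist x y ^ 2 / 4 ≤ (dist x z ^ 2 + dist y z ^ 2) / 2

theorem SemiParallelogramLaw.eq_of_forall_sum_dist_sq_le {X ι : Type*} [MetricSpace X]
    [Fintype ι] [Nonempty ι] (hX : SemiParallelogramLaw X) (p : ι → X) {x x' : X}
    (hx : ∀ y, ∑ i, dist x (p i) ^ 2 ≤ ∑ i, dist y (p i) ^ 2)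
    (hx' : ∀ y, ∑ i, dist x' (p i) ^ 2 ≤ ∑ i, dist y (p i) ^ 2) : x = x' := by
  obtain ⟨m, hm⟩ := hX x x'
  have hsum : ∑ i, dist m (p i) ^ 2 + Fintype.card ι * (dist x x' ^ 2 / 4)
      ≤ (∑ i, dist x (p i) ^ 2 + ∑ i, dist x' (p i) ^ 2) / 2 := by
    rw [← Finset.card_univ, ← nsmul_eq_mul, ← Finset.sum_const, ← Finset.sum_add_distrib,
      ← Finset.sum_add_distrib, Finset.sum_div]
    exact Finset.sum_le_sum fun i _ ↦ hm (p i)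
  have hcard : (0 : ℝ) < Fintype.card ι := by exact_mod_cast Fintype.card_pos
  have hdist : dist x x' ^ 2 ≤ 0 := by nlinarith [hx m, hx' m]
  exact dist_eq_zero.1 <| (pow_eq_zero_iff two_ne_zero).1 <| hdist.antisymm (sq_nonneg _)

theorem exists_forall_sum_dist_sq_le {X ι : Type*} [PseudoMetricSpace X] [ProperSpace X]
    [Fintype ι] [Nonempty ι] (p : ι → X) :
    ∃ x, ∀ y, ∑ i, dist x (p i) ^ 2 ≤ ∑ i, dist y (p i) ^ 2 := by
  let i₀ := Classical.arbitrary ι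
  have : Nonempty X := ⟨p i₀⟩
  refine (continuous_finsetSum _ fun i _ ↦ by fun_prop).exists_forall_le ?_
  exact tendsto_atTop_mono
    (fun y ↦ Finset.single_le_sum (f := fun i ↦ dist y (p i) ^ 2) (fun i _ ↦ sq_nonneg _)
      (Finset.mem_univ i₀))
    ((tendsto_pow_atTop two_ne_zero).comp (tendsto_dist_right_cocompact_atTop (p i₀)))

namespace UpperHalfPlane

/-- By `cosh_dist_geodesicMidpoint_mul` with `z = x`, this point is at distance `dist x y / 2`
from both `x` and `y`. -/
noncomputable def geodesicMidpoint (x y : ℍ) : ℍ :=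
  ⟨⟨(x.re * y.im + y.re * x.im) / (x.im + y.im),
    2 * cosh (dist x y / 2) * (x.im * y.im / (x.im + y.im))⟩, by
    have := x.im_pos; have := y.im_pos
    exact mul_pos (mul_pos two_pos (cosh_pos _)) (by positivity)⟩

@[simp]
theorem geodesicMidpoint_re (x y : ℍ) :
    (geodesicMidpoint x y).re = (x.re * y.im + y.re * x.im) / (x.im + y.im) := rfl

@[simp]
theorem geodesicMidpoint_im (x y : ℍ) :
    (geodesicMidpoint x y).im = 2 * cosh (dist x y / 2) * (x.im * y.im / (x.im + y.im)) := rfl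

theorem cosh_half_dist_sq (z w : ℍ) :
    cosh (dist z w / 2) ^ 2 = ((z.re - w.re) ^ 2 + (z.im + w.im) ^ 2) / (4 * z.im * w.im) := by
  have h := cosh_dist' z w
  rw [← mul_div_cancel₀ (dist z w) two_ne_zero, cosh_two_mul, sinh_sq] at h
  have := z.im_pos; have := w.im_pos
  field_simp at h ⊢
  linear_combination h

theorem cosh_dist_geodesicMidpoint_mul (x y z : ℍ) :
    cosh (dist (geodesicMidpoint x y) z) * (2 * cosh (dist x y / 2))
      = cosh (dist x z) + cosh (dist y z) := by
  have := x.im_pos; have := y.im_pos; have := z.im_pos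
  have hxy : x.im + y.im ≠ 0 := by positivity
  have hc := cosh_half_dist_sq x y
  rw [cosh_dist', cosh_dist', cosh_dist', geodesicMidpoint_re, geodesicMidpoint_im]
  field_simp at hc ⊢
  linear_combination (x.im * y.im) * hc

theorem semiParallelogramLaw : SemiParallelogramLaw ℍ := by
  refine fun x y ↦ ⟨geodesicMidpoint x y, fun z ↦ ?_⟩
  have hmedian : cosh (dist (geodesicMidpoint x y) z) * cosh (dist x y / 2)
      = (cosh (dist x z) + cosh (dist y z)) / 2 := by
    linarith [cosh_dist_geodesicMidpoint_mul x y z]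
  have := sq_add_sq_le_of_cosh_mul_cosh_eq hmedian
    (by rw [mul_div_cancel₀ _ two_ne_zero]; exact abs_dist_sub_le x y z)
    (by rw [mul_div_cancel₀ _ two_ne_zero]; exact dist_triangle_right x y z)
  linarith

end UpperHalfPlane

/-- Existence and uniqueness of the Riemannian (Karcher) center of mass of finitely
many points in the hyperbolic plane: there is a unique point minimizing the sum of
squared hyperbolic distances. -/
theorem exists_unique_center_of_mass (n : ℕ) (hn : 1 ≤ n) (p : Fin n → ℍ) :
    ∃! x : ℍ, ∀ y : ℍ, ∑ i, (dist x (p i)) ^ 2 ≤ ∑ i, (dist y (p i)) ^ 2 := by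
  have : Nonempty (Fin n) := ⟨⟨0, hn⟩⟩
  obtain ⟨x, hx⟩ := exists_forall_sum_dist_sq_le p
  exact ⟨x, hx, fun y hy ↦
    UpperHalfPlane.semiParallelogramLaw.eq_of_forall_sum_dist_sq_le p hy hx⟩
end

section
/- Let r ≥ 1, let Γ be a subgroup of SL(2,ℝ), let ρ : Γ →* (Fin r → SL(2,ℝ)) be a group homomorphism, let L ≥ 0, and let f : ℍ → (Fin r → ℍ) be L-Lipschitz (for the hyperbolic metric on ℍ and the supremum metric on Fin r → ℍ) and ρ-equivariant, i.e. (f (γ • z)) i = (ρ(γ) i) • (f z) i for all γ ∈ Γ, z ∈ ℍ, i. Then for every γ ∈ Γ and every index i, the infimum displacement of ρ(γ) i is bounded by L times the infimum displacement of γ: (⨅ w : ℍ, dist ((ρ(γ) i) • w) w) ≤ L · (⨅ z : ℍ, dist (γ • z) z). -/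
open scoped UpperHalfPlane MatrixGroups

theorem iInf_dist_le_mul_iInf_dist_of_semiconj {X Y : Type*} [PseudoMetricSpace X]
    [PseudoMetricSpace Y] [Nonempty X] {φ : X → Y} {g : X → X} {h : Y → Y} {L : ℝ}
    (hL : 0 ≤ L) (hφ : ∀ x y, dist (φ x) (φ y) ≤ L * dist x y) (hφgh : Function.Semiconj φ g h) :
    ⨅ y, dist (h y) y ≤ L * ⨅ x, dist (g x) x := by
  rw [Real.mul_iInf_of_nonneg hL]
  refine le_ciInf fun x => ?_
  calc ⨅ y, dist (h y) y
      ≤ dist (h (φ x)) (φ x) := ciInf_le ⟨0, Set.forall_mem_range.2 fun _ => dist_nonneg⟩ _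
    _ = dist (φ (g x)) (φ x) := by rw [hφgh x]
    _ ≤ L * dist (g x) x := hφ _ _

theorem translation_length_le_of_equivariant_lipschitz_general
    (r : ℕ)
    (Γ : Subgroup SL(2, ℝ))
    (ρ : Γ →* (Fin r → SL(2, ℝ))) (L : ℝ) (hL : 0 ≤ L)
    (f : ℍ → (Fin r → ℍ))
    (hfLip : ∀ z w : ℍ, dist (f z) (f w) ≤ L * dist z w)
    (hfequiv : ∀ γ : Γ, ∀ z : ℍ, ∀ i : Fin r,
      f ((γ : SL(2, ℝ)) • z) i = (ρ γ i) • (f z i)) :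
    ∀ γ : Γ, ∀ i : Fin r,
      (⨅ w : ℍ, dist ((ρ γ i) • w) w) ≤ L * ⨅ z : ℍ, dist ((γ : SL(2, ℝ)) • z) z := by
  intro γ i
  exact iInf_dist_le_mul_iInf_dist_of_semiconj (φ := fun z => f z i) hL
    (fun z w => (dist_le_pi_dist _ _ i).trans (hfLip z w)) (fun z => hfequiv γ z i)

/-- If `f : ℍ → ℍ^r` is `L`-Lipschitz and `ρ`-equivariant, then the translation
length (infimum displacement) of each factor `ρ(γ) i` is at most `L` times the
translation length of `γ`. -/
theorem translation_length_le_of_equivariant_lipschitz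
    (r : ℕ) (hr : 1 ≤ r)
    (Γ : Subgroup SL(2, ℝ))
    (ρ : Γ →* (Fin r → SL(2, ℝ))) (L : ℝ) (hL : 0 ≤ L)
    (f : ℍ → (Fin r → ℍ))
    (hfLip : ∀ z w : ℍ, dist (f z) (f w) ≤ L * dist z w)
    (hfequiv : ∀ γ : Γ, ∀ z : ℍ, ∀ i : Fin r,
      f ((γ : SL(2, ℝ)) • z) i = (ρ γ i) • (f z i)) :
    ∀ γ : Γ, ∀ i : Fin r,
      (⨅ w : ℍ, dist ((ρ γ i) • w) w) ≤ L * ⨅ z : ℍ, dist ((γ : SL(2, ℝ)) • z) z :=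
  translation_length_le_of_equivariant_lipschitz_general r Γ ρ L hL f hfLip hfequiv
end

section
/- Let g ∈ SL(2,ℝ) and let t = |trace of the matrix g|. If t > 2 (g is hyperbolic), then the translation length of the action of g on the hyperbolic plane equals twice the logarithm of the largest eigenvalue of g: ⨅ z : ℍ, dist (g • z) z = 2 · Real.log ((t + Real.sqrt (t² − 4)) / 2). -/
/-!
For `g = [[a, b], [c, d]]` and `z = x + iy` one has `(g • z - z) (cz + d) = -(cz² + (d - a)z - b)`,
so `cosh d(w, z) = 1 + |w - z|² / (2 Im w Im z)` gives
`cosh d(g • z, z) = 1 + |cz² + (d - a)z - b|² / (2y²)`. For a real quadratic `q`,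
`|q(z)|² = discrim q · y² + (a real quadratic in x, y)²`, and here `discrim q = tr² g - 4`; hence
`cosh d(g • z, z) = (tr² g - 2) / 2 + (c|z|² + (d - a)x - b)² / (2y²)`.
The square vanishes on the axis of `g`, which meets `ℍ` because `tr² g - 4 > 0`, so the minimal
displacement `ℓ` satisfies `cosh ℓ = (tr² g - 2) / 2 = cosh (2 log λ)`, the last since `λ + λ⁻¹ = |tr g|`.
-/

open scoped UpperHalfPlane MatrixGroups
open UpperHalfPlane Real

theorem Complex.normSq_quadratic (a b c : ℝ) (w : ℂ) :
    Complex.normSq (a * w ^ 2 + b * w + c) =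
      discrim a b c * w.im ^ 2 + (a * Complex.normSq w + b * w.re + c) ^ 2 := by
  simp only [Complex.normSq_apply, discrim, pow_two, Complex.add_re, Complex.add_im,
    Complex.mul_re, Complex.mul_im, Complex.ofReal_re, Complex.ofReal_im]
  ring

theorem exists_im_pos_of_discrim_pos {a b c : ℝ} (h : 0 < discrim a b c) :
    ∃ w : ℂ, 0 < w.im ∧ a * Complex.normSq w + b * w.re + c = 0 := by
  rw [discrim] at h
  by_cases ha : a = 0
  · have hb : b ≠ 0 := by
      rintro rfl
      simp [ha] at h
    refine ⟨⟨-c / b, 1⟩, one_pos, ?_⟩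
    simp only [ha, Complex.normSq_mk]
    field_simp
    ring
  · set D := b ^ 2 - 4 * a * c with hD
    have hsqrt : √D ^ 2 = D := sq_sqrt h.le
    have habs : |a| ^ 2 = a ^ 2 := sq_abs a
    refine ⟨⟨-b / (2 * a), √D / (2 * |a|)⟩, by positivity, ?_⟩
    simp only [Complex.normSq_mk]
    field_simp
    linear_combination a ^ 2 * hsqrt + (4 * a * c - b ^ 2) * habs - a ^ 2 * hD

theorem cosh_dist_smul_self_eq_normSq (g : SL(2, ℝ)) (z : ℍ) :
    cosh (dist (g • z) z) =
      1 + Complex.normSq (g 1 0 * (z : ℂ) ^ 2 + (g 1 1 - g 0 0) * z - g 0 1) / (2 * z.im ^ 2) := by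
  set G := Matrix.SpecialLinearGroup.mapGL ℝ g
  have hden : (g 1 0 * z + g 1 1 : ℂ) ≠ 0 := by simpa [G, denom] using denom_ne_zero G z
  have him : (g • z).im = z.im / Complex.normSq (g 1 0 * z + g 1 1) := by
    rw [show g • z = G • z from rfl]
    simpa [G, denom] using im_smul_eq_div_normSq G z
  have hsub : ((g • z : ℍ) : ℂ) - z =
      -(g 1 0 * (z : ℂ) ^ 2 + (g 1 1 - g 0 0) * z - g 0 1) / (g 1 0 * z + g 1 1) := by
    rw [coe_specialLinearGroup_apply, eq_div_iff hden, sub_mul]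
    simp only [Algebra.algebraMap_self, RingHom.id_apply, div_mul_cancel₀ _ hden]
    ring
  rw [cosh_dist, him, Complex.dist_eq, hsub, norm_div, norm_neg, div_pow,
    ← Complex.normSq_eq_norm_sq, ← Complex.normSq_eq_norm_sq]
  have hN := Complex.normSq_pos.2 hden
  have hy := z.im_pos
  field_simp

theorem Matrix.SpecialLinearGroup.discrim_eq_trace_sq_sub_four (g : SL(2, ℝ)) :
    discrim (g 1 0) (g 1 1 - g 0 0) (-g 0 1) = (g : Matrix (Fin 2) (Fin 2) ℝ).trace ^ 2 - 4 := by
  have hdet : g 0 0 * g 1 1 - g 0 1 * g 1 0 = 1 := by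
    rw [← Matrix.det_fin_two, g.det_coe]
  rw [discrim, Matrix.trace_fin_two]
  linear_combination -4 * hdet

def axisForm (g : SL(2, ℝ)) (z : ℍ) : ℝ :=
  g 1 0 * Complex.normSq z + (g 1 1 - g 0 0) * z.re - g 0 1

theorem cosh_dist_smul_self (g : SL(2, ℝ)) (z : ℍ) :
    cosh (dist (g • z) z) =
      ((g : Matrix (Fin 2) (Fin 2) ℝ).trace ^ 2 - 2) / 2 + axisForm g z ^ 2 / (2 * z.im ^ 2) := by
  have hq := Complex.normSq_quadratic (g 1 0) (g 1 1 - g 0 0) (-g 0 1) z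
  simp only [Complex.ofReal_sub, Complex.ofReal_neg, ← sub_eq_add_neg, coe_im, coe_re,
    g.discrim_eq_trace_sq_sub_four] at hq
  have hy := z.im_pos
  rw [cosh_dist_smul_self_eq_normSq, hq, axisForm]
  field_simp
  ring

theorem exists_axisForm_eq_zero (g : SL(2, ℝ))
    (hg : 4 < (g : Matrix (Fin 2) (Fin 2) ℝ).trace ^ 2) : ∃ z : ℍ, axisForm g z = 0 := by
  obtain ⟨w, hw, hw0⟩ :=
    exists_im_pos_of_discrim_pos (g.discrim_eq_trace_sq_sub_four ▸ sub_pos.2 hg)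
  exact ⟨⟨w, hw⟩, by simpa [axisForm, ← sub_eq_add_neg] using hw0⟩

theorem cosh_two_log_eigenvalue {t : ℝ} (ht : 2 ≤ t) :
    cosh (2 * log ((t + √(t ^ 2 - 4)) / 2)) = (t ^ 2 - 2) / 2 := by
  have hs : √(t ^ 2 - 4) ^ 2 = t ^ 2 - 4 := sq_sqrt (by nlinarith)
  have hinv : ((t + √(t ^ 2 - 4)) / 2)⁻¹ = (t - √(t ^ 2 - 4)) / 2 := by
    rw [inv_eq_of_mul_eq_one_right]
    linear_combination (-1 / 4 : ℝ) * hs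
  rw [cosh_two_mul, cosh_log (by positivity), sinh_log (by positivity), hinv]
  linear_combination (1 / 4 : ℝ) * hs

/-- Displacement formula for a hyperbolic element of `SL(2, ℝ)`: if `|tr g| > 2`,
then the translation length of `g` acting on the hyperbolic plane equals
`2 log λ`, where `λ = (|tr g| + √((tr g)² − 4))/2` is the largest eigenvalue. -/
theorem translation_length_eq_two_log_eigenvalue
    (g : SL(2, ℝ)) (t : ℝ) (ht : t = |Matrix.trace (g : Matrix (Fin 2) (Fin 2) ℝ)|)
    (hhyp : 2 < t) :
    (⨅ z : ℍ, dist (g • z) z) = 2 * Real.log ((t + Real.sqrt (t ^ 2 - 4)) / 2) := by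
  set L := 2 * log ((t + √(t ^ 2 - 4)) / 2)
  have hL0 : 0 ≤ L := mul_nonneg zero_le_two <| log_nonneg <| by
    rw [le_div_iff₀ two_pos]
    linarith [sqrt_nonneg (t ^ 2 - 4)]
  have hcosh (z : ℍ) : cosh (dist (g • z) z) = cosh L + axisForm g z ^ 2 / (2 * z.im ^ 2) := by
    rw [cosh_dist_smul_self, cosh_two_log_eigenvalue hhyp.le, ht, sq_abs]
  obtain ⟨z₀, hz₀⟩ := exists_axisForm_eq_zero g (by rw [← sq_abs, ← ht]; nlinarith)
  refine IsGLB.ciInf_eq (IsLeast.isGLB ⟨⟨z₀, cosh_injOn dist_nonneg hL0 ?_⟩, ?_⟩)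
  · rw [hcosh, hz₀]
    simp
  · rintro _ ⟨z, rfl⟩
    rw [← cosh_strictMonoOn.le_iff_le hL0 dist_nonneg, hcosh]
    have hy := z.im_pos
    simp only [le_add_iff_nonneg_right]
    positivity
end

section
/- Let r ≥ 1, let Γ be a subgroup of SL(2,ℝ), let ρ : Γ →* (Fin r → SL(2,ℝ)) be a group homomorphism, let L ≥ 0, and let f : ℍ → (Fin r → ℍ) be an L-Lipschitz ρ-equivariant map (for the hyperbolic metric on ℍ and the supremum metric on Fin r → ℍ). Let γ ∈ Γ be hyperbolic, i.e. |trace γ| > 2, with largest eigenvalue λ = (|tr γ| + √((tr γ)² − 4))/2. Then for every index i such that |trace (ρ(γ) i)| > 2, the largest eigenvalue λᵢ = (|tr (ρ(γ) i)| + √((tr (ρ(γ) i))² − 4))/2 satisfies Real.log λᵢ ≤ L · Real.log λ. -/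
/-!
For `g = (a b; c d) ∈ SL(2, ℝ)` and `z = x + i y ∈ ℍ`,
`sinh² (d(z, g z) / 2) = (tr² g - 4) / 4 + ((c |z|² + (d - a) x - b) / 2y)²`,
and `(tr² g - 4) / 4 = sinh² (log λ(g))`. So every point is moved by at least `2 log λ(g)`, with
equality exactly on the axis of `g`, where the last square vanishes. Taking `z` on the axis of `γ`,
`2 log λᵢ ≤ d(f(z)ᵢ, ρ(γ)ᵢ f(z)ᵢ) = d(f(z)ᵢ, f(γ z)ᵢ) ≤ L d(z, γ z) = 2 L log λ`.
-/

open scoped UpperHalfPlane MatrixGroups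
open Real

theorem Matrix.SpecialLinearGroup.det_fin_two_eq_one {R : Type*} [CommRing R] (g : SL(2, R)) :
    g 0 0 * g 1 1 - g 0 1 * g 1 0 = 1 := by
  rw [← Matrix.det_fin_two]
  exact g.det_coe

-- `c z ^ 2 + (d - a) z - b` vanishes exactly at the fixed points of `z ↦ (a z + b) / (c z + d)`.
theorem normSq_fixedPoint_poly {a b c d : ℝ} (hdet : a * d - b * c = 1) (z : ℂ) :
    Complex.normSq (c * z ^ 2 + (d - a) * z - b) =
      ((a + d) ^ 2 - 4) * z.im ^ 2 + (c * Complex.normSq z + (d - a) * z.re - b) ^ 2 := by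
  simp only [Complex.normSq_apply, pow_two, Complex.add_re, Complex.add_im, Complex.sub_re,
    Complex.sub_im, Complex.mul_re, Complex.mul_im, Complex.ofReal_re, Complex.ofReal_im]
  linear_combination (-4 * z.im ^ 2) * hdet

-- The larger root of `x ^ 2 - |t| x + 1`: for `g ∈ SL(2, ℝ)` with `|tr g| ≥ 2`, the largest
-- eigenvalue of `± g`.
noncomputable def eigenvalueOfTrace (t : ℝ) : ℝ := (|t| + √(|t| ^ 2 - 4)) / 2

theorem one_le_eigenvalueOfTrace {t : ℝ} (ht : 2 ≤ |t|) : 1 ≤ eigenvalueOfTrace t := by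
  unfold eigenvalueOfTrace
  linarith [sqrt_nonneg (|t| ^ 2 - 4)]

theorem sq_sinh_log_eigenvalueOfTrace {t : ℝ} (ht : 2 ≤ |t|) :
    sinh (log (eigenvalueOfTrace t)) ^ 2 = (t ^ 2 - 4) / 4 := by
  have hdisc : 0 ≤ |t| ^ 2 - 4 := by nlinarith
  have hinv : (eigenvalueOfTrace t)⁻¹ = (|t| - √(|t| ^ 2 - 4)) / 2 := by
    refine inv_eq_of_mul_eq_one_right ?_
    rw [eigenvalueOfTrace]
    linear_combination (-1 / 4 : ℝ) * sq_sqrt hdisc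
  rw [sinh_log ((one_le_eigenvalueOfTrace ht).trans_lt' one_pos), hinv, eigenvalueOfTrace]
  linear_combination (1 / 4 : ℝ) * sq_sqrt hdisc + (1 / 4 : ℝ) * sq_abs t

namespace UpperHalfPlane

-- `c |z|² + (d - a) Re z - b = 0` is the axis of `z ↦ (a z + b) / (c z + d)`: the geodesic joining
-- its two fixed points on `ℝ ∪ {∞}`.
theorem exists_on_axis {a b c d : ℝ} (hdet : a * d - b * c = 1)
    (htr : 4 < (a + d) ^ 2) :
    ∃ z : ℍ, c * Complex.normSq z + (d - a) * z.re - b = 0 := by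
  by_cases hc : c = 0
  · have hda : d - a ≠ 0 := by
      intro h
      obtain rfl : d = a := by linarith
      subst hc
      nlinarith
    refine ⟨⟨⟨b / (d - a), 1⟩, one_pos⟩, ?_⟩
    change c * _ + (d - a) * (b / (d - a)) - b = 0
    rw [hc, zero_mul, zero_add, mul_div_cancel₀ _ hda, sub_self]
  · have hdisc : 0 < (a + d) ^ 2 - 4 := by linarith
    set y := √((a + d) ^ 2 - 4) / (2 * |c|)
    have hy : 0 < y := by positivity
    have hy2 : y ^ 2 = ((a + d) ^ 2 - 4) / (4 * c ^ 2) := by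
      rw [div_pow, sq_sqrt hdisc.le, mul_pow, sq_abs]
      norm_num
    refine ⟨⟨⟨(a - d) / (2 * c), y⟩, hy⟩, ?_⟩
    simp only [Complex.normSq_apply, UpperHalfPlane.re, ← pow_two, hy2]
    field_simp
    linear_combination 16 * hdet

variable (g : SL(2, ℝ))

theorem im_specialLinearGroup_smul (z : ℍ) :
    (g • z).im = z.im / Complex.normSq (g 1 0 * z + g 1 1) := by
  rw [MulAction.compHom_smul_def, im_smul_eq_div_normSq]
  simp [denom]

theorem sq_sinh_half_dist_smul_eq_normSq (z : ℍ) :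
    sinh (dist z (g • z) / 2) ^ 2 =
      Complex.normSq (g 1 0 * z ^ 2 + (g 1 1 - g 0 0) * z - g 0 1) / (4 * z.im ^ 2) := by
  have hdenom : (g 1 0 * z + g 1 1 : ℂ) ≠ 0 := by
    simpa [denom] using denom_ne_zero (Matrix.SpecialLinearGroup.mapGL ℝ g) z
  have hsub : (z : ℂ) - (g • z : ℍ) =
      (g 1 0 * z ^ 2 + (g 1 1 - g 0 0) * z - g 0 1) / (g 1 0 * z + g 1 1) := by
    rw [coe_specialLinearGroup_apply, eq_div_iff hdenom]
    simp only [Algebra.algebraMap_self, RingHom.id_apply]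
    rw [sub_mul, div_mul_cancel₀ _ hdenom]
    ring
  have hN := Complex.normSq_pos.2 hdenom
  rw [sinh_half_dist, div_pow, mul_pow, sq_sqrt (by positivity), dist_eq_norm,
    ← Complex.normSq_eq_norm_sq, hsub, Complex.normSq_div, im_specialLinearGroup_smul]
  field_simp
  ring

theorem sq_sinh_half_dist_smul (z : ℍ) :
    sinh (dist z (g • z) / 2) ^ 2 = ((g : Matrix (Fin 2) (Fin 2) ℝ).trace ^ 2 - 4) / 4 +
      ((g 1 0 * Complex.normSq z + (g 1 1 - g 0 0) * z.re - g 0 1) / (2 * z.im)) ^ 2 := by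
  have hy := z.im_pos
  rw [sq_sinh_half_dist_smul_eq_normSq, normSq_fixedPoint_poly g.det_fin_two_eq_one,
    Matrix.trace_fin_two, coe_im, coe_re]
  field_simp
  ring

theorem two_log_eigenvalueOfTrace_le_dist_smul
    (ht : 2 ≤ |(g : Matrix (Fin 2) (Fin 2) ℝ).trace|) (z : ℍ) :
    2 * log (eigenvalueOfTrace (g : Matrix (Fin 2) (Fin 2) ℝ).trace) ≤ dist z (g • z) := by
  have hsq : sinh (log (eigenvalueOfTrace (g : Matrix (Fin 2) (Fin 2) ℝ).trace)) ^ 2 ≤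
      sinh (dist z (g • z) / 2) ^ 2 := by
    rw [sq_sinh_log_eigenvalueOfTrace ht, sq_sinh_half_dist_smul]
    exact le_add_of_nonneg_right (sq_nonneg _)
  have := (pow_le_pow_iff_left₀ ?_ ?_ two_ne_zero).1 hsq
  · linarith [sinh_le_sinh.1 this]
  · exact sinh_nonneg_iff.2 (log_nonneg (one_le_eigenvalueOfTrace ht))
  · exact sinh_nonneg_iff.2 (by linarith [dist_nonneg (x := z) (y := g • z)])

theorem exists_dist_smul_eq_two_log_eigenvalueOfTrace
    (ht : 2 < |(g : Matrix (Fin 2) (Fin 2) ℝ).trace|) :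
    ∃ z : ℍ,
      dist z (g • z) = 2 * log (eigenvalueOfTrace (g : Matrix (Fin 2) (Fin 2) ℝ).trace) := by
  have htr : 4 < (g 0 0 + g 1 1) ^ 2 := by
    rw [← Matrix.trace_fin_two]; nlinarith [sq_abs (g : Matrix (Fin 2) (Fin 2) ℝ).trace]
  obtain ⟨z, hz⟩ := exists_on_axis g.det_fin_two_eq_one htr
  refine ⟨z, ?_⟩
  have hsq : sinh (dist z (g • z) / 2) ^ 2 =
      sinh (log (eigenvalueOfTrace (g : Matrix (Fin 2) (Fin 2) ℝ).trace)) ^ 2 := by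
    rw [sq_sinh_log_eigenvalueOfTrace ht.le, sq_sinh_half_dist_smul, hz]
    ring
  have := sinh_injective ((sq_eq_sq₀ ?_ ?_).1 hsq)
  · linarith
  · exact sinh_nonneg_iff.2 (by linarith [dist_nonneg (x := z) (y := g • z)])
  · exact sinh_nonneg_iff.2 (log_nonneg (one_le_eigenvalueOfTrace ht.le))

end UpperHalfPlane

theorem log_eigenvalue_le_of_equivariant_lipschitz_general
    (r : ℕ)
    (Γ : Subgroup SL(2, ℝ))
    (ρ : Γ →* (Fin r → SL(2, ℝ))) (L : ℝ)
    (f : ℍ → (Fin r → ℍ))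
    (hfLip : ∀ z w : ℍ, dist (f z) (f w) ≤ L * dist z w)
    (hfequiv : ∀ γ : Γ, ∀ z : ℍ, ∀ i : Fin r,
      f ((γ : SL(2, ℝ)) • z) i = (ρ γ i) • (f z i))
    (γ : Γ)
    (hγhyp : 2 < |Matrix.trace ((γ : SL(2, ℝ)) : Matrix (Fin 2) (Fin 2) ℝ)|)
    (lam : ℝ)
    (hlam : lam = (|Matrix.trace ((γ : SL(2, ℝ)) : Matrix (Fin 2) (Fin 2) ℝ)| +
      Real.sqrt (|Matrix.trace ((γ : SL(2, ℝ)) : Matrix (Fin 2) (Fin 2) ℝ)| ^ 2 - 4)) / 2) :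
    ∀ i : Fin r, 2 < |Matrix.trace ((ρ γ i : SL(2, ℝ)) : Matrix (Fin 2) (Fin 2) ℝ)| →
      Real.log ((|Matrix.trace ((ρ γ i : SL(2, ℝ)) : Matrix (Fin 2) (Fin 2) ℝ)| +
        Real.sqrt (|Matrix.trace ((ρ γ i : SL(2, ℝ)) : Matrix (Fin 2) (Fin 2) ℝ)| ^ 2 - 4)) / 2)
        ≤ L * Real.log lam := by
  intro i hi
  obtain ⟨z, hz⟩ := UpperHalfPlane.exists_dist_smul_eq_two_log_eigenvalueOfTrace _ hγhyp
  have hdisp : 2 * log (eigenvalueOfTrace (ρ γ i : Matrix (Fin 2) (Fin 2) ℝ).trace) ≤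
      2 * (L * log lam) :=
    calc _ ≤ dist (f z i) (ρ γ i • f z i) :=
          UpperHalfPlane.two_log_eigenvalueOfTrace_le_dist_smul _ hi.le _
      _ = dist (f z i) (f ((γ : SL(2, ℝ)) • z) i) := by rw [hfequiv]
      _ ≤ dist (f z) (f ((γ : SL(2, ℝ)) • z)) := dist_le_pi_dist _ _ i
      _ ≤ L * dist z ((γ : SL(2, ℝ)) • z) := hfLip _ _
      _ = 2 * (L * log lam) := by rw [hz, hlam, eigenvalueOfTrace]; ring
  exact le_of_mul_le_mul_left hdisp two_pos

/-- Proposition 3.3 of the paper: if `f : ℍ → ℍ^r` is an `L`-Lipschitz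
`ρ`-equivariant map and `γ` is hyperbolic with largest eigenvalue `λ`, then every
hyperbolic factor `ρ(γ) i` with largest eigenvalue `λᵢ` satisfies
`log λᵢ ≤ L * log λ`. -/
theorem log_eigenvalue_le_of_equivariant_lipschitz
    (r : ℕ) (hr : 1 ≤ r)
    (Γ : Subgroup SL(2, ℝ))
    (ρ : Γ →* (Fin r → SL(2, ℝ))) (L : ℝ) (hL : 0 ≤ L)
    (f : ℍ → (Fin r → ℍ))
    (hfLip : ∀ z w : ℍ, dist (f z) (f w) ≤ L * dist z w)
    (hfequiv : ∀ γ : Γ, ∀ z : ℍ, ∀ i : Fin r,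
      f ((γ : SL(2, ℝ)) • z) i = (ρ γ i) • (f z i))
    (γ : Γ)
    (hγhyp : 2 < |Matrix.trace ((γ : SL(2, ℝ)) : Matrix (Fin 2) (Fin 2) ℝ)|)
    (lam : ℝ)
    (hlam : lam = (|Matrix.trace ((γ : SL(2, ℝ)) : Matrix (Fin 2) (Fin 2) ℝ)| +
      Real.sqrt (|Matrix.trace ((γ : SL(2, ℝ)) : Matrix (Fin 2) (Fin 2) ℝ)| ^ 2 - 4)) / 2) :
    ∀ i : Fin r, 2 < |Matrix.trace ((ρ γ i : SL(2, ℝ)) : Matrix (Fin 2) (Fin 2) ℝ)| →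
      Real.log ((|Matrix.trace ((ρ γ i : SL(2, ℝ)) : Matrix (Fin 2) (Fin 2) ℝ)| +
        Real.sqrt (|Matrix.trace ((ρ γ i : SL(2, ℝ)) : Matrix (Fin 2) (Fin 2) ℝ)| ^ 2 - 4)) / 2)
        ≤ L * Real.log lam :=
  log_eigenvalue_le_of_equivariant_lipschitz_general r Γ ρ L f hfLip hfequiv γ hγhyp lam hlam
end

section
/- Let G be a group and let x, y, z, w ∈ G satisfy x² = y² = z² = 1, w³ = 1, and x·y·z·w = 1. Then the commutator ⁅x·y, z·x⁆ equals w, and the subgroup generated by {x, y, z, w} equals the subgroup generated by the two elements {x·y, z·x}. -/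
open scoped commutatorElement

/-!
Writing `A = xy` and `B = zx`, the involution relations collapse the commutator: `⁅A, B⁆ = (xyz)²`,
and `xyzw = 1` together with `w³ = 1` gives `(xyz)² = w⁻² = w`. Hence `w ∈ ⟨A, B⟩`, and then so are
`x = w A B`, `y = x⁻¹ A` and `z = B x⁻¹`.
-/

section

variable {G : Type*} [Group G]

lemma inv_eq_self_of_sq_eq_one {g : G} (hg : g ^ 2 = 1) : g⁻¹ = g :=
  inv_eq_of_mul_eq_one_right (by rwa [← sq])

lemma commutatorElement_mem {H : Subgroup G} {a b : G} (ha : a ∈ H) (hb : b ∈ H) :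
    ⁅a, b⁆ ∈ H := by
  rw [commutatorElement_def]
  exact mul_mem (mul_mem (mul_mem ha hb) (inv_mem ha)) (inv_mem hb)

lemma commutatorElement_mul_mul_of_sq_eq_one {x y z : G}
    (hx : x ^ 2 = 1) (hy : y ^ 2 = 1) (hz : z ^ 2 = 1) :
    ⁅x * y, z * x⁆ = (x * y * z) ^ 2 := by
  simp only [commutatorElement_def, mul_inv_rev, inv_eq_self_of_sq_eq_one hx,
    inv_eq_self_of_sq_eq_one hy, inv_eq_self_of_sq_eq_one hz]
  calc x * y * (z * x) * (y * x) * (x * z) = x * y * z * x * y * x ^ 2 * z := by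
        simp only [sq, mul_assoc]
    _ = (x * y * z) ^ 2 := by simp only [hx, mul_one, sq, mul_assoc]

lemma sq_eq_of_mul_eq_one_of_pow_three_eq_one {v w : G} (hvw : v * w = 1) (hw : w ^ 3 = 1) :
    v ^ 2 = w := by
  rw [eq_inv_of_mul_eq_one_left hvw, inv_pow, inv_eq_iff_eq_inv]
  exact eq_inv_of_mul_eq_one_left (by rw [← pow_succ, hw])

lemma closure_four_eq_closure_two_of_mul_eq_one {x y z w : G} (hrel : x * y * z * w = 1)
    (hw : w ∈ Subgroup.closure {x * y, z * x}) :
    Subgroup.closure {x, y, z, w} = Subgroup.closure {x * y, z * x} := by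
  set H := Subgroup.closure {x * y, z * x}
  have hA : x * y ∈ H := Subgroup.subset_closure (by simp)
  have hB : z * x ∈ H := Subgroup.subset_closure (by simp)
  have hx : x ∈ H := by
    have hwxyz : w * (x * y * z) = 1 := by rw [eq_inv_of_mul_eq_one_right hrel, inv_mul_cancel]
    have : x = w * (x * y) * (z * x) := by
      rw [show w * (x * y) * (z * x) = w * (x * y * z) * x by group, hwxyz, one_mul]
    exact this ▸ mul_mem (mul_mem hw hA) hB
  have hy : y ∈ H := by simpa using mul_mem (inv_mem hx) hA
  have hz : z ∈ H := by simpa using mul_mem hB (inv_mem hx)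
  refine le_antisymm ?_ ?_
  · rw [Subgroup.closure_le]
    simp [Set.insert_subset_iff, hx, hy, hz, hw]
  · have hK : ∀ g ∈ ({x, y, z, w} : Set G), g ∈ Subgroup.closure {x, y, z, w} :=
      fun _ hg => Subgroup.subset_closure hg
    rw [Subgroup.closure_le, Set.pair_subset_iff]
    exact ⟨mul_mem (hK x (by simp)) (hK y (by simp)), mul_mem (hK z (by simp)) (hK x (by simp))⟩

end

/-- The (0;2,2,2,3;0) group computation of Section 5: if `x, y, z` are involutions,
`w` has order dividing three, and `x y z w = 1`, then `⁅xy, zx⁆ = w` and the group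
generated by `x, y, z, w` is generated by the two elements `xy` and `zx`. -/
theorem two_generator_of_signature_0_2223
    {G : Type*} [Group G] (x y z w : G)
    (hx : x ^ 2 = 1) (hy : y ^ 2 = 1) (hz : z ^ 2 = 1) (hw : w ^ 3 = 1)
    (hrel : x * y * z * w = 1) :
    ⁅x * y, z * x⁆ = w ∧
      Subgroup.closure {x, y, z, w} = Subgroup.closure {x * y, z * x} := by
  have hcomm : ⁅x * y, z * x⁆ = w := by
    rw [commutatorElement_mul_mul_of_sq_eq_one hx hy hz,
      sq_eq_of_mul_eq_one_of_pow_three_eq_one hrel hw]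
  refine ⟨hcomm, closure_four_eq_closure_two_of_mul_eq_one hrel ?_⟩
  exact hcomm ▸ commutatorElement_mem (Subgroup.subset_closure (by simp))
    (Subgroup.subset_closure (by simp))
end

section
/- For every natural number n ≥ 1, set ε = (2 + Real.sqrt 3)ⁿ. Then the intermediate field of ℝ over ℚ generated by the two real numbers 4 + ε² and (4 + ε²)·(1 + ε⁻²) equals the intermediate field generated by Real.sqrt 3; that is, IntermediateField.adjoin ℚ ({4 + ε², (4 + ε²)·(1 + ε⁻²)} : Set ℝ) = IntermediateField.adjoin ℚ ({Real.sqrt 3} : Set ℝ). -/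
/-!
With `x = ε²`, the generators `4 + x` and `(4 + x)(1 + x⁻¹)` generate the same field as `x`
(subtract `4` from the first). Since `n ≥ 1`, `x = (2 + √3)^(2n) = a + b√3` with `a, b ∈ ℕ` and
`b > 0`, so `√3 = (x - a) / b` and `ℚ(x) = ℚ(√3)`.
-/

open IntermediateField

section

variable {K L : Type*} [Field K] [Field L] [Algebra K L]

theorem adjoin_four_add_mul_one_add_inv_eq_adjoin_simple (x : L) :
    adjoin K {4 + x, (4 + x) * (1 + x⁻¹)} = K⟮x⟯ := by
  have hx : x ∈ K⟮x⟯ := mem_adjoin_simple_self K x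
  have h4 : (4 : L) ∈ K⟮x⟯ := ofNat_mem _ 4
  apply le_antisymm
  · rw [adjoin_le_iff, Set.insert_subset_iff, Set.singleton_subset_iff]
    exact ⟨add_mem h4 hx, mul_mem (add_mem h4 hx) (add_mem (one_mem _) (inv_mem hx))⟩
  · rw [adjoin_simple_le_iff]
    have hsum : 4 + x ∈ adjoin K {4 + x, (4 + x) * (1 + x⁻¹)} := subset_adjoin K _ (.inl rfl)
    simpa using sub_mem hsum (ofNat_mem _ 4)

theorem adjoin_simple_eq_of_eq_add_mul {x y : L} {a b : K} (hb : b ≠ 0)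
    (hxy : x = algebraMap K L a + algebraMap K L b * y) : K⟮x⟯ = K⟮y⟯ := by
  apply le_antisymm
  · rw [adjoin_simple_le_iff, hxy]
    have hy : y ∈ K⟮y⟯ := mem_adjoin_simple_self K y
    exact add_mem (K⟮y⟯.algebraMap_mem a) (mul_mem (K⟮y⟯.algebraMap_mem b) hy)
  · rw [adjoin_simple_le_iff]
    have hyx : y = (algebraMap K L b)⁻¹ * (x - algebraMap K L a) := by
      rw [hxy, add_sub_cancel_left, inv_mul_cancel_left₀ (by simpa using hb)]
    rw [hyx]
    have hx : x ∈ K⟮x⟯ := mem_adjoin_simple_self K x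
    exact mul_mem (inv_mem (K⟮x⟯.algebraMap_mem b)) (sub_mem hx (K⟮x⟯.algebraMap_mem a))

end

theorem Real.exists_add_mul_sqrt_pow_eq {p q : ℕ} (hp : 0 < p) (hq : 0 < q) (d : ℕ) {m : ℕ}
    (hm : 1 ≤ m) : ∃ a b : ℕ, 0 < b ∧ (p + q * √d) ^ m = a + b * √d := by
  induction m, hm using Nat.le_induction with
  | base => exact ⟨p, q, hq, pow_one _⟩
  | succ m _ ih =>
    obtain ⟨a, b, hb, hab⟩ := ih
    refine ⟨a * p + b * q * d, a * q + b * p, by positivity, ?_⟩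
    have hd : √d * √d = d := Real.mul_self_sqrt (Nat.cast_nonneg d)
    rw [pow_succ, hab]
    push_cast
    linear_combination (b * q : ℝ) * hd

/-- Identification of the invariant trace field of the groups `Γₙ` of Section 5:
for `ε = (2 + √3)ⁿ`, the field `ℚ(4 + ε², (4 + ε²)(1 + ε⁻²))` equals `ℚ(√3)`. -/
theorem invariant_trace_field_eq_Q_sqrt3 (n : ℕ) (hn : 1 ≤ n) :
    IntermediateField.adjoin ℚ
        ({4 + ((2 + Real.sqrt 3) ^ n) ^ 2,
          (4 + ((2 + Real.sqrt 3) ^ n) ^ 2) * (1 + (((2 + Real.sqrt 3) ^ n) ^ 2)⁻¹)} : Set ℝ)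
      = IntermediateField.adjoin ℚ ({Real.sqrt 3} : Set ℝ) := by
  rw [adjoin_four_add_mul_one_add_inv_eq_adjoin_simple]
  obtain ⟨a, b, hb, hab⟩ :=
    Real.exists_add_mul_sqrt_pow_eq (p := 2) (q := 1) two_pos one_pos 3 (m := n * 2) (by omega)
  refine adjoin_simple_eq_of_eq_add_mul (a := (a : ℚ)) (b := (b : ℚ)) (by positivity) ?_
  rw [← pow_mul]
  simpa using hab
end

section
/- Let K be the subfield ℚ(√3) of ℝ (the intermediate field IntermediateField.adjoin ℚ {√3}, a field), let n ≥ 1 and let ε = (2 + √3)ⁿ regarded as an element of K. Then the quaternion algebra ℍ[K, 4 + ε², −(1 + ε²)] over K is isomorphic as a K-algebra to the 2×2 matrix algebra: Nonempty (ℍ[K, 4 + ε², −(1 + ε²)] ≃ₐ[K] Matrix (Fin 2) (Fin 2) K). -/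
/-!
A quaternion algebra `(a, b / F)` splits as soon as `b = c² - a d²` is a norm from `F(√a)`:
the matrices `!![0, 1; a, 0]` and `!![c, d; -a d, -c]` anticommute and square to `a` and `b`,
so they define an algebra map `(a, b / F) → M(2, F)`, which is injective when `a b ≠ 0` and
hence bijective by dimension count. For `a = 4 + ε²` and `b = -(1 + ε²)` we have
`b = (√3)² - a`; this is the paper's solution `x = y = 1/√3` of `a x² + b y² = 1`.
-/

open scoped Quaternion

namespace QuaternionAlgebra

variable {R : Type*} [CommRing R]

def matrixBasis (a c d : R) :
    Basis (Matrix (Fin 2) (Fin 2) R) a 0 (c ^ 2 - a * d ^ 2) where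
  i := !![0, 1; a, 0]
  j := !![c, d; -a * d, -c]
  k := !![-a * d, -c; a * c, a * d]
  i_mul_i := by simp [Matrix.one_fin_two]
  j_mul_j := by
    ext i j; fin_cases i <;> fin_cases j <;> simp <;> ring
  i_mul_j := by simp
  j_mul_i := by
    ext i j; fin_cases i <;> fin_cases j <;> simp <;> ring

theorem matrixBasis_liftHom_apply (a c d : R) (x : ℍ[R, a, c ^ 2 - a * d ^ 2]) :
    (matrixBasis a c d).liftHom x =
      !![x.re + c * x.imJ - a * d * x.imK, x.imI + d * x.imJ - c * x.imK;
        a * (x.imI - d * x.imJ + c * x.imK), x.re - c * x.imJ + a * d * x.imK] := by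
  ext i j
  fin_cases i <;> fin_cases j <;>
    simp [Basis.lift, matrixBasis, Matrix.algebraMap_eq_diagonal] <;> ring

variable {F : Type*} [Field F]

theorem matrixBasis_liftHom_injective {a c d : F} (h2 : (2 : F) ≠ 0) (ha : a ≠ 0)
    (hb : c ^ 2 - a * d ^ 2 ≠ 0) : Function.Injective (matrixBasis a c d).liftHom := by
  rw [injective_iff_map_eq_zero]
  intro x hx
  rw [matrixBasis_liftHom_apply, ← Matrix.ext_iff] at hx
  have e00 := hx 0 0
  have e01 := hx 0 1
  have e10 := hx 1 0
  have e11 := hx 1 1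
  simp only [Matrix.of_apply, Matrix.cons_val', Matrix.cons_val_zero, Matrix.cons_val_one,
    Matrix.zero_apply, Matrix.empty_val', Matrix.cons_val_fin_one] at e00 e01 e10 e11
  have e10' : x.imI - d * x.imJ + c * x.imK = 0 := (mul_eq_zero.mp e10).resolve_left ha
  have hre : x.re = 0 := by
    simpa [h2] using (by linear_combination e00 + e11 : 2 * x.re = 0)
  have hI : x.imI = 0 := by
    simpa [h2] using (by linear_combination e01 + e10' : 2 * x.imI = 0)
  have hJ : x.imJ = 0 := by
    simpa [hb] using (by linear_combination c * (e00 - hre) - a * d * (e01 - hI) :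
      (c ^ 2 - a * d ^ 2) * x.imJ = 0)
  have hK : x.imK = 0 := by
    simpa [hb] using (by linear_combination d * (e00 - hre) - c * (e01 - hI) :
      (c ^ 2 - a * d ^ 2) * x.imK = 0)
  ext <;> assumption

theorem nonempty_algEquiv_matrix_of_eq_sq_sub {a b c d : F} (h2 : (2 : F) ≠ 0) (ha : a ≠ 0)
    (hb : b ≠ 0) (hbcd : b = c ^ 2 - a * d ^ 2) :
    Nonempty (ℍ[F, a, b] ≃ₐ[F] Matrix (Fin 2) (Fin 2) F) := by
  subst hbcd
  have hinj := matrixBasis_liftHom_injective h2 ha hb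
  have hdim : Module.finrank F ℍ[F, a, c ^ 2 - a * d ^ 2] =
      Module.finrank F (Matrix (Fin 2) (Fin 2) F) := by
    simp [finrank_eq_four, Module.finrank_matrix]
  have hsurj := (LinearMap.injective_iff_surjective_of_finrank_eq_finrank hdim
    (f := (matrixBasis a c d).liftHom.toLinearMap)).mp hinj
  exact ⟨AlgEquiv.ofBijective _ ⟨hinj, hsurj⟩⟩

end QuaternionAlgebra

theorem quaternion_algebra_splits_general
    (K : IntermediateField ℚ ℝ)
    (hK : K = IntermediateField.adjoin ℚ ({Real.sqrt 3} : Set ℝ))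
    (ε : K) :
    Nonempty (ℍ[K, 4 + ε ^ 2, -(1 + ε ^ 2)] ≃ₐ[K] Matrix (Fin 2) (Fin 2) K) := by
  have hmem : Real.sqrt 3 ∈ K := hK ▸ IntermediateField.subset_adjoin ℚ _ rfl
  set s : K := ⟨Real.sqrt 3, hmem⟩
  have hs : s ^ 2 = 3 := by
    apply K.val.injective
    rw [map_pow, map_ofNat]
    exact Real.sq_sqrt (by norm_num)
  have ha : (4 + ε ^ 2 : K) ≠ 0 := by
    rw [← map_ne_zero_iff K.val K.val.injective, map_add, map_pow, map_ofNat]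
    positivity
  have hb : -(1 + ε ^ 2 : K) ≠ 0 := by
    rw [← map_ne_zero_iff K.val K.val.injective, map_neg, neg_ne_zero, map_add, map_pow, map_one]
    positivity
  exact QuaternionAlgebra.nonempty_algEquiv_matrix_of_eq_sq_sub (c := s) (d := 1) two_ne_zero ha hb
    (by linear_combination -hs)

/-- The invariant quaternion algebra of the groups `Γₙ` of Section 5 splits:
for `K = ℚ(√3)` and `ε = (2 + √3)ⁿ ∈ K`, the quaternion algebra
`(4 + ε², −(1 + ε²) / K)` is isomorphic to `M(2, K)`. -/
theorem quaternion_algebra_splits (n : ℕ) (hn : 1 ≤ n)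
    (K : IntermediateField ℚ ℝ)
    (hK : K = IntermediateField.adjoin ℚ ({Real.sqrt 3} : Set ℝ))
    (ε : K) (hε : (ε : ℝ) = (2 + Real.sqrt 3) ^ n) :
    Nonempty (ℍ[K, 4 + ε ^ 2, -(1 + ε ^ 2)] ≃ₐ[K] Matrix (Fin 2) (Fin 2) K) :=
  quaternion_algebra_splits_general K hK ε
end

section
/- For every natural number n ≥ 1, the real number Real.sqrt (1 + (2 + Real.sqrt 3)^(2n)) does not belong to the subfield ℚ(√3) of ℝ (the intermediate field IntermediateField.adjoin ℚ {Real.sqrt 3}); equivalently, 1 + ε² is not the square of an element of ℚ(√3), where ε = (2+√3)ⁿ. -/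
/-!
Write `ε = (2 + √3)ⁿ = p + q√3` with `p² - 3q² = 1` and `p ≥ 2`. If `(a + b√3)² = 1 + ε²` with
`a, b ∈ ℚ`, comparing coefficients gives `a² + 3b² = 2p²` and `a² · 3b² = 3p²q² = p²(p² - 1)`,
so `a² = p² ± p`. But `p² ± p` lies strictly between consecutive squares, so it is not the square
of an integer, hence not of a rational.
-/

theorem Algebra.exists_eq_add_mul_of_mem_adjoin_of_sq_eq {R A : Type*} [CommSemiring R]
    [CommSemiring A] [Algebra R A] {x : A} {c : R} (hx : x ^ 2 = algebraMap R A c) {y : A}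
    (hy : y ∈ Algebra.adjoin R {x}) :
    ∃ a b : R, y = algebraMap R A a + algebraMap R A b * x := by
  induction hy using Algebra.adjoin_induction with
  | mem y hy =>
    rw [Set.mem_singleton_iff.mp hy]
    exact ⟨0, 1, by simp⟩
  | algebraMap r => exact ⟨r, 0, by simp⟩
  | add y z _ _ hy hz =>
    obtain ⟨a, b, rfl⟩ := hy
    obtain ⟨a', b', rfl⟩ := hz
    exact ⟨a + a', b + b', by simp only [map_add]; ring⟩
  | mul y z _ _ hy hz =>
    obtain ⟨a, b, rfl⟩ := hy
    obtain ⟨a', b', rfl⟩ := hz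
    refine ⟨a * a' + b * b' * c, a * b' + b * a', ?_⟩
    simp only [map_add, map_mul, ← hx]
    ring

theorem IntermediateField.exists_eq_add_mul_of_mem_adjoin_simple_of_sq_eq {K L : Type*} [Field K]
    [Field L] [Algebra K L] {x : L} {c : K} (hx : x ^ 2 = algebraMap K L c) {y : L}
    (hy : y ∈ IntermediateField.adjoin K {x}) :
    ∃ a b : K, y = algebraMap K L a + algebraMap K L b * x := by
  have hint : IsIntegral K x := .of_pow two_pos (hx ▸ isIntegral_algebraMap)
  rw [← IntermediateField.mem_toSubalgebra,
    IntermediateField.adjoin_simple_toSubalgebra_of_isAlgebraic hint.isAlgebraic] at hy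
  exact Algebra.exists_eq_add_mul_of_mem_adjoin_of_sq_eq hx hy

theorem Irrational.eq_and_eq_of_ratCast_add_ratCast_mul_eq {x : ℝ} (hx : Irrational x)
    {a b c d : ℚ} (h : a + b * x = c + d * x) : a = c ∧ b = d := by
  have hbd : b = d := by
    by_contra hbd
    have hirr : Irrational (((a - c : ℚ) : ℝ) + ((b - d : ℚ) : ℝ) * x) :=
      (hx.ratCast_mul (sub_ne_zero.mpr hbd)).ratCast_add _
    exact hirr.ne_zero (by push_cast; linear_combination h)
  subst hbd
  exact ⟨by exact_mod_cast add_right_cancel h, rfl⟩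

theorem exists_pell_eq_two_add_sqrt_three_pow {n : ℕ} (hn : 1 ≤ n) :
    ∃ p q : ℤ, 2 ≤ p ∧ 0 ≤ q ∧ p ^ 2 - 3 * q ^ 2 = 1 ∧ (2 + √3) ^ n = p + q * √3 := by
  induction n, hn using Nat.le_induction with
  | base => exact ⟨2, 1, le_rfl, zero_le_one, by norm_num, by push_cast; ring⟩
  | succ n _ ih =>
    obtain ⟨p, q, hp, hq, hpell, heq⟩ := ih
    refine ⟨2 * p + 3 * q, p + 2 * q, by linarith, by linarith, by linear_combination hpell, ?_⟩
    rw [pow_succ, heq]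
    push_cast
    linear_combination (q : ℝ) * Real.sq_sqrt (show (0 : ℝ) ≤ 3 by norm_num)

theorem sq_eq_sq_add_or_sq_sub_of_pell {K : Type*} [CommRing K] [IsDomain K] {a b p q : K}
    (hpell : p ^ 2 - 3 * q ^ 2 = 1) (hsum : a ^ 2 + 3 * b ^ 2 = 1 + p ^ 2 + 3 * q ^ 2)
    (hprod : a * b = p * q) : a ^ 2 = p ^ 2 + p ∨ a ^ 2 = p ^ 2 - p := by
  have hroot : (a ^ 2 - (p ^ 2 + p)) * (a ^ 2 - (p ^ 2 - p)) = 0 := by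
    linear_combination a ^ 2 * hsum - 3 * (a * b + p * q) * hprod + (p ^ 2 - a ^ 2) * hpell
  rcases mul_eq_zero.mp hroot with h | h
  · exact .inl (sub_eq_zero.mp h)
  · exact .inr (sub_eq_zero.mp h)

theorem Int.not_isSquare_of_sq_lt_of_lt_sq {m n : ℤ} (hlt : m ^ 2 < n) (hlt' : n < (m + 1) ^ 2) :
    ¬IsSquare n := by
  rintro ⟨r, rfl⟩
  have hr : r * r = |r| ^ 2 := by rw [sq_abs, sq]
  rcases le_or_gt |r| m with h | h <;> nlinarith [abs_nonneg r]

/-- For `ε = (2 + √3)ⁿ` with `n ≥ 1`, the real number `√(1 + ε²)` does not lie in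
`ℚ(√3)`; equivalently, `1 + ε²` is not a square in `ℚ(√3)`. -/
theorem sqrt_one_add_eps_sq_not_mem (n : ℕ) (hn : 1 ≤ n) :
    Real.sqrt (1 + (2 + Real.sqrt 3) ^ (2 * n)) ∉
      IntermediateField.adjoin ℚ ({Real.sqrt 3} : Set ℝ) := by
  intro hmem
  have h3 : √3 ^ 2 = 3 := Real.sq_sqrt (by norm_num)
  obtain ⟨a, b, hab⟩ := IntermediateField.exists_eq_add_mul_of_mem_adjoin_simple_of_sq_eq
    (c := 3) (by simp) hmem
  obtain ⟨p, q, hp, -, hpell, hε⟩ := exists_pell_eq_two_add_sqrt_three_pow hn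
  have hsq : (a + b * √3 : ℝ) ^ 2 = 1 + (p + q * √3) ^ 2 := by
    rw [← hε, ← pow_mul, mul_comm n, ← eq_ratCast (algebraMap ℚ ℝ), ← eq_ratCast (algebraMap ℚ ℝ),
      ← hab, Real.sq_sqrt (by positivity)]
  obtain ⟨hsum, hprod⟩ := Irrational.eq_and_eq_of_ratCast_add_ratCast_mul_eq
    Nat.prime_three.irrational_sqrt (a := a ^ 2 + 3 * b ^ 2) (b := 2 * a * b)
    (c := 1 + p ^ 2 + 3 * q ^ 2) (d := 2 * p * q)
    (by push_cast; linear_combination hsq + ((q : ℝ) ^ 2 - (b : ℝ) ^ 2) * h3)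
  rcases sq_eq_sq_add_or_sq_sub_of_pell (by exact_mod_cast hpell) hsum
      (by linear_combination hprod / 2) with h | h
  · exact Int.not_isSquare_of_sq_lt_of_lt_sq (m := p) (n := p ^ 2 + p)
      (by nlinarith) (by nlinarith)
      (Rat.isSquare_intCast_iff.mp ⟨a, by push_cast; rw [← h, sq]⟩)
  · exact Int.not_isSquare_of_sq_lt_of_lt_sq (m := p - 1) (n := p ^ 2 - p)
      (by nlinarith) (by nlinarith)
      (Rat.isSquare_intCast_iff.mp ⟨a, by push_cast; rw [← h, sq]⟩)
end

section
/- For a natural number n ≥ 1, set ε = (2 + Real.sqrt 3)ⁿ, τ = 1 + 2ε⁻² + 2ε⁻¹·Real.sqrt (1 + ε⁻²), and ω = 1 + 2ε² + 2ε·Real.sqrt (1 + ε²). Then τ is an algebraic integer (integral over ℤ), its minimal polynomial over ℚ has degree 4, and the set of complex roots of this minimal polynomial is exactly {τ, τ⁻¹, ω, ω⁻¹}. In particular every complex root has absolute value at most ω, i.e. ω is the house of τ. -/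
/-!
`τ` and `ω` are the larger roots of the reciprocal quadratics `X² - (2 + 4ε⁻²) X + 1` and
`X² - (2 + 4ε²) X + 1`. Writing `ε² = c + d√3` with `c² - 3d² = 1`, we get `ε² + ε⁻² = 2c`, so
the product of the two quadratics is a monic quartic over `ℤ` whose roots are `τ^{±1}`, `ω^{±1}`.

It is the minimal polynomial because `ℚ(τ)` contains `√3` (through `τ + τ⁻¹ = 2 + 4(c - d√3)`)
and `A = √(1 + ε²)`, and `1, √3, A, √3 A` are linearly independent over `ℚ`. The latter amounts
to `A ∉ ℚ(√3)`: since `1 + ε² = 2cε` and `2(2 + √3) = (1 + √3)²`, the number `A²` is an integer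
`≡ 2 (mod 4)` times a square of `ℚ(√3)`, and such an integer is not a square in `ℚ(√3)`.
-/

open Polynomial IntermediateField

lemma irrational_sqrt_three : Irrational √3 := by
  simpa using Nat.prime_three.irrational_sqrt

lemma sq_sqrt_three : √3 ^ 2 = 3 := Real.sq_sqrt (by norm_num)

lemma eq_zero_of_ratCast_add_ratCast_mul_sqrt_three_eq_zero {p q : ℚ}
    (h : (p : ℝ) + q * √3 = 0) : p = 0 ∧ q = 0 := by
  obtain rfl | hq := eq_or_ne q 0
  · exact ⟨by simpa using h, rfl⟩
  · refine absurd ⟨-p / q, ?_⟩ irrational_sqrt_three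
    push_cast
    field_simp
    linarith

def sqrtThreeSubfield : Subfield ℝ where
  carrier := {x | ∃ p q : ℚ, x = p + q * √3}
  zero_mem' := ⟨0, 0, by simp⟩
  one_mem' := ⟨1, 0, by simp⟩
  add_mem' := by
    rintro _ _ ⟨p, q, rfl⟩ ⟨p', q', rfl⟩
    exact ⟨p + p', q + q', by push_cast; ring⟩
  neg_mem' := by
    rintro _ ⟨p, q, rfl⟩
    exact ⟨-p, -q, by push_cast; ring⟩
  mul_mem' := by
    rintro _ _ ⟨p, q, rfl⟩ ⟨p', q', rfl⟩
    exact ⟨p * p' + 3 * q * q', p * q' + q * p', by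
      push_cast; linear_combination q * q' * sq_sqrt_three⟩
  inv_mem' := by
    rintro _ ⟨p, q, rfl⟩
    obtain hx | hx := eq_or_ne ((p : ℝ) + q * √3) 0
    · exact ⟨0, 0, by simp [hx]⟩
    have hconj : (p : ℝ) - q * √3 ≠ 0 := by
      intro h
      obtain ⟨rfl, hq⟩ := eq_zero_of_ratCast_add_ratCast_mul_sqrt_three_eq_zero
        (p := p) (q := -q) (by push_cast; linarith)
      simp [neg_eq_zero.mp hq] at hx
    have hnorm : (p : ℝ) ^ 2 - 3 * q ^ 2 = (p + q * √3) * (p - q * √3) := by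
      linear_combination q ^ 2 * sq_sqrt_three
    refine ⟨p / (p ^ 2 - 3 * q ^ 2), -q / (p ^ 2 - 3 * q ^ 2), ?_⟩
    push_cast
    rw [hnorm]
    field_simp
    ring

lemma sqrt_three_mem_sqrtThreeSubfield : √3 ∈ sqrtThreeSubfield := ⟨0, 1, by simp⟩

lemma sq_ne_intCast_of_mem_sqrtThreeSubfield {x : ℝ} (hx : x ∈ sqrtThreeSubfield) {k : ℤ}
    (hk : k % 4 = 2) : x ^ 2 ≠ k := by
  obtain ⟨p, q, rfl⟩ := hx
  intro h
  obtain ⟨hre, him⟩ := eq_zero_of_ratCast_add_ratCast_mul_sqrt_three_eq_zero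
    (p := p ^ 2 + 3 * q ^ 2 - k) (q := 2 * p * q)
    (by push_cast; linear_combination h - q ^ 2 * sq_sqrt_three)
  have hsq : IsSquare k ∨ IsSquare (3 * k) := by
    rcases mul_eq_zero.mp (by linear_combination him / 2 : p * q = 0) with rfl | rfl
    · exact .inr (Rat.isSquare_intCast_iff.mp ⟨3 * q, by push_cast; linear_combination -3 * hre⟩)
    · exact .inl (Rat.isSquare_intCast_iff.mp ⟨p, by linear_combination -hre⟩)
  rcases hsq with ⟨m, hm⟩ | ⟨m, hm⟩
  · exact Int.sq_ne_two_mod_four m (by omega)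
  · exact Int.sq_ne_two_mod_four m (by omega)

lemma exists_two_add_sqrt_three_pow_eq (n : ℕ) :
    ∃ c d : ℤ, (2 + √3) ^ n = c + d * √3 ∧ c ^ 2 - 3 * d ^ 2 = 1 ∧
      (Even n → c % 2 = 1 ∧ d % 4 = 0) ∧ (Odd n → c % 4 = 2 ∧ d % 2 = 1) := by
  induction n with
  | zero => exact ⟨1, 0, by simp⟩
  | succ n ih =>
    obtain ⟨c, d, hpow, hpell, heven, hodd⟩ := ih
    refine ⟨2 * c + 3 * d, c + 2 * d, ?_, by linear_combination hpell, fun h => ?_, fun h => ?_⟩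
    · rw [pow_succ, hpow]
      push_cast
      linear_combination d * sq_sqrt_three
    · have := hodd (by simpa [Nat.even_add_one] using h)
      omega
    · have := heven (by simpa [Nat.odd_add_one] using h)
      omega

lemma inv_eq_of_sq_sub_three_mul_sq_eq_one {c d : ℤ} (h : c ^ 2 - 3 * d ^ 2 = 1) :
    ((c : ℝ) + d * √3)⁻¹ = c - d * √3 :=
  inv_eq_of_mul_eq_one_right <| by
    linear_combination (by exact_mod_cast h : (c : ℝ) ^ 2 - 3 * d ^ 2 = 1) - d ^ 2 * sq_sqrt_three

lemma exists_intCast_eq_two_add_sqrt_three_pow_add_inv (n : ℕ) :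
    ∃ a : ℤ, (a : ℝ) = (2 + √3) ^ n + ((2 + √3) ^ n)⁻¹ := by
  obtain ⟨c, d, hpow, hpell, -⟩ := exists_two_add_sqrt_three_pow_eq n
  exact ⟨2 * c, by rw [hpow, inv_eq_of_sq_sub_three_mul_sq_eq_one hpell]; push_cast; ring⟩

lemma sqrt_one_add_sq_two_add_sqrt_three_pow_notMem (n : ℕ) :
    √(1 + ((2 + √3) ^ n) ^ 2) ∉ sqrtThreeSubfield := by
  intro hA
  obtain ⟨c, d, hpow, hpell, heven, hodd⟩ := exists_two_add_sqrt_three_pow_eq n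
  have hsq : 1 + ((2 + √3) ^ n) ^ 2 = 2 * c * (2 + √3) ^ n := by
    rw [hpow]
    linear_combination
      d ^ 2 * sq_sqrt_three - (by exact_mod_cast hpell : (c : ℝ) ^ 2 - 3 * d ^ 2 = 1)
  -- `2cε` is `2c` (n even) or `c` (n odd) times a square in `ℚ(√3)`, as `2 (2 + √3) = (1 + √3)²`
  obtain ⟨β, hβ, hβ0, k, hk, hkβ⟩ : ∃ β ∈ sqrtThreeSubfield, β ≠ 0 ∧
      ∃ k : ℤ, k % 4 = 2 ∧ 2 * c * (2 + √3) ^ n = k * β ^ 2 := by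
    have hs := sqrt_three_mem_sqrtThreeSubfield
    have hγ : 2 + √3 ∈ sqrtThreeSubfield := add_mem (ofNat_mem _ 2) hs
    obtain ⟨m, rfl | rfl⟩ := Nat.even_or_odd' n
    · refine ⟨(2 + √3) ^ m, pow_mem hγ m, by positivity, 2 * c, ?_, ?_⟩
      · have := heven (even_two_mul m)
        omega
      · rw [pow_mul']
        push_cast
        ring
    · refine ⟨(1 + √3) * (2 + √3) ^ m, mul_mem (add_mem (one_mem _) hs) (pow_mem hγ m),
        by positivity, c, (hodd (odd_two_mul_add_one m)).1, ?_⟩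
      rw [pow_succ, pow_mul']
      linear_combination -c * ((2 + √3) ^ m) ^ 2 * sq_sqrt_three
  refine sq_ne_intCast_of_mem_sqrtThreeSubfield (div_mem hA hβ) hk ?_
  rw [div_pow, Real.sq_sqrt (by positivity), hsq, hkβ]
  field_simp

lemma linearIndependent_one_sqrt_three_mul {A : ℝ} (hA : A ∉ sqrtThreeSubfield) :
    LinearIndependent ℚ ![1, √3, A, √3 * A] := by
  rw [Fintype.linearIndependent_iff]
  intro g hg
  simp only [Fin.sum_univ_four, Matrix.cons_val, Rat.smul_def] at hg
  have hB : (g 2 : ℝ) + g 3 * √3 = 0 := by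
    by_contra hB
    refine hA ?_
    rw [show A = -(g 0 + g 1 * √3) / (g 2 + g 3 * √3) by rw [eq_div_iff hB]; linear_combination hg]
    exact div_mem (neg_mem ⟨g 0, g 1, rfl⟩) ⟨g 2, g 3, rfl⟩
  obtain ⟨h2, h3⟩ := eq_zero_of_ratCast_add_ratCast_mul_sqrt_three_eq_zero hB
  obtain ⟨h0, h1⟩ := eq_zero_of_ratCast_add_ratCast_mul_sqrt_three_eq_zero
    (p := g 0) (q := g 1) (by linear_combination hg - A * hB)
  intro i
  fin_cases i <;> assumption

lemma le_natDegree_minpoly_of_linearIndependent {K L : Type*} [Field K] [Field L] [Algebra K L]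
    {x : L} (hx : IsIntegral K x) {ι : Type*} [Fintype ι] {v : ι → L}
    (hv : LinearIndependent K v) (hmem : ∀ i, v i ∈ K⟮x⟯) :
    Fintype.card ι ≤ (minpoly K x).natDegree := by
  have := IntermediateField.adjoin.finiteDimensional hx
  rw [← IntermediateField.adjoin.finrank hx]
  exact LinearIndependent.fintype_card_le_finrank (b := fun i => (⟨v i, hmem i⟩ : K⟮x⟯))
    (.of_comp K⟮x⟯.val.toLinearMap hv)

lemma sqrt_three_mem_adjoin_and_mem_adjoin {τ e A : ℝ} {c d : ℤ} (hd : d ≠ 0)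
    (he : e = c - d * √3) (hsum : τ + τ⁻¹ = 2 + 4 * e) (hτ : τ = 1 + 2 * e + 2 * e * A) :
    √3 ∈ ℚ⟮τ⟯ ∧ A ∈ ℚ⟮τ⟯ := by
  have hτS := mem_adjoin_simple_self ℚ τ
  have heS : e ∈ ℚ⟮τ⟯ := by
    rw [show e = (τ + τ⁻¹ - 2) / 4 by linarith]
    exact div_mem (sub_mem (add_mem hτS (inv_mem hτS)) (ofNat_mem _ 2)) (ofNat_mem _ 4)
  have he0 : e ≠ 0 := by
    intro h
    have := eq_zero_of_ratCast_add_ratCast_mul_sqrt_three_eq_zero (p := c) (q := -d)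
      (by push_cast; linarith)
    exact hd (by exact_mod_cast neg_eq_zero.mp this.2)
  constructor
  · rw [show √3 = (c - e) / d by field_simp; linarith]
    exact div_mem (sub_mem (intCast_mem _ c) heS) (intCast_mem _ d)
  · rw [show A = (τ - 1 - 2 * e) / (2 * e) by field_simp; linarith]
    exact div_mem (sub_mem (sub_mem hτS (one_mem _)) (mul_mem (ofNat_mem _ 2) heS))
      (mul_mem (ofNat_mem _ 2) heS)

lemma one_add_two_mul_add_two_mul_add_inv {K : Type*} [Field K] {t w : K}
    (h : w ^ 2 = t * (t + 1)) : (1 + 2 * t + 2 * w) + (1 + 2 * t + 2 * w)⁻¹ = 2 + 4 * t := by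
  rw [inv_eq_of_mul_eq_one_right (b := 1 + 2 * t - 2 * w) (by linear_combination -4 * h)]
  ring

lemma tau_eq {ε τ : ℝ} (hε : 0 < ε)
    (hτ : τ = 1 + 2 * (ε ^ 2)⁻¹ + 2 * ε⁻¹ * √(1 + (ε ^ 2)⁻¹)) :
    τ = 1 + 2 * (ε ^ 2)⁻¹ + 2 * (ε ^ 2)⁻¹ * √(1 + ε ^ 2) := by
  rw [hτ, show 1 + (ε ^ 2)⁻¹ = (1 + ε ^ 2) / ε ^ 2 by field_simp; ring,
    Real.sqrt_div' _ (by positivity), Real.sqrt_sq hε.le]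
  field_simp

lemma tau_add_inv {ε τ : ℝ} (hε : 0 < ε)
    (hτ : τ = 1 + 2 * (ε ^ 2)⁻¹ + 2 * ε⁻¹ * √(1 + (ε ^ 2)⁻¹)) :
    τ + τ⁻¹ = 2 + 4 * (ε ^ 2)⁻¹ := by
  rw [tau_eq hε hτ, mul_assoc]
  refine one_add_two_mul_add_two_mul_add_inv ?_
  rw [mul_pow, Real.sq_sqrt (by positivity)]
  field_simp

lemma omega_add_inv {ε ω : ℝ} (hω : ω = 1 + 2 * ε ^ 2 + 2 * ε * √(1 + ε ^ 2)) :
    ω + ω⁻¹ = 2 + 4 * ε ^ 2 := by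
  rw [hω, mul_assoc]
  refine one_add_two_mul_add_two_mul_add_inv ?_
  rw [mul_pow, Real.sq_sqrt (by positivity)]
  ring

lemma one_le_tau_and_tau_le_omega {ε τ ω : ℝ} (hε : 1 ≤ ε)
    (hτ : τ = 1 + 2 * (ε ^ 2)⁻¹ + 2 * ε⁻¹ * √(1 + (ε ^ 2)⁻¹))
    (hω : ω = 1 + 2 * ε ^ 2 + 2 * ε * √(1 + ε ^ 2)) : 1 ≤ τ ∧ τ ≤ ω := by
  have hinv : ε⁻¹ ≤ ε := (inv_le_one_of_one_le₀ hε).trans hε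
  have hinv2 : (ε ^ 2)⁻¹ ≤ ε ^ 2 := (inv_le_one_of_one_le₀ (one_le_pow₀ hε)).trans (one_le_pow₀ hε)
  subst hτ hω
  constructor
  · have : 0 ≤ 2 * (ε ^ 2)⁻¹ + 2 * ε⁻¹ * √(1 + (ε ^ 2)⁻¹) := by positivity
    linarith
  · gcongr

lemma four_le_natDegree_minpoly_tau {n : ℕ} (hn : 1 ≤ n) {ε τ : ℝ} (hε : ε = (2 + √3) ^ n)
    (hτ : τ = 1 + 2 * (ε ^ 2)⁻¹ + 2 * ε⁻¹ * √(1 + (ε ^ 2)⁻¹)) (hint : IsIntegral ℚ τ) :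
    4 ≤ (minpoly ℚ τ).natDegree := by
  obtain ⟨c, d, hpow, hpell, -⟩ := exists_two_add_sqrt_three_pow_eq (2 * n)
  have hε1 : 1 < ε := hε ▸ one_lt_pow₀ (by linarith [Real.sqrt_nonneg 3]) (by omega)
  have hE : ε ^ 2 = c + d * √3 := by rw [hε, ← pow_mul, mul_comm, hpow]
  have hEinv : (ε ^ 2)⁻¹ = c - d * √3 := by rw [hE, inv_eq_of_sq_sub_three_mul_sq_eq_one hpell]
  have hd : d ≠ 0 := by
    rintro rfl
    have hE1 : 1 < ε ^ 2 := one_lt_pow₀ hε1 two_ne_zero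
    have := (inv_lt_one_of_one_lt₀ hE1).trans hE1
    simp only [Int.cast_zero, zero_mul, add_zero, sub_zero] at hE hEinv
    linarith
  have hε0 : 0 < ε := by linarith
  obtain ⟨hs, hA⟩ := sqrt_three_mem_adjoin_and_mem_adjoin hd hEinv (tau_add_inv hε0 hτ)
    (tau_eq hε0 hτ)
  have hA' : √(1 + ε ^ 2) ∉ sqrtThreeSubfield := by
    rw [hε]
    exact sqrt_one_add_sq_two_add_sqrt_three_pow_notMem n
  simpa using le_natDegree_minpoly_of_linearIndependent hint
    (linearIndependent_one_sqrt_three_mul hA') (by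
      intro i
      fin_cases i
      exacts [one_mem _, hs, hA, mul_mem hs hA])

/-- The product of `X² - (2 + 4e⁻¹) X + 1` and `X² - (2 + 4e) X + 1`, where `a = e + e⁻¹`. -/
noncomputable def quartic (a : ℤ) : ℤ[X] :=
  X ^ 4 - C (4 + 4 * a) * X ^ 3 + C (22 + 8 * a) * X ^ 2 - C (4 + 4 * a) * X + 1

lemma monic_quartic (a : ℤ) : (quartic a).Monic := by
  unfold quartic
  monicity!

lemma natDegree_quartic (a : ℤ) : (quartic a).natDegree = 4 := by
  unfold quartic
  compute_degree!

lemma aeval_quartic {K : Type*} [Field K] {a : ℤ} {e x y : K} (ha : (a : K) = e + e⁻¹)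
    (he : e ≠ 0) (hx : x ≠ 0) (hy : y ≠ 0) (hxsum : x + x⁻¹ = 2 + 4 * e⁻¹)
    (hysum : y + y⁻¹ = 2 + 4 * e) (z : K) :
    aeval z (quartic a) = (z - x) * (z - x⁻¹) * (z - y) * (z - y⁻¹) := by
  have hx' : (z - x) * (z - x⁻¹) = z ^ 2 - (2 + 4 * e⁻¹) * z + 1 := by
    linear_combination -z * hxsum + mul_inv_cancel₀ hx
  have hy' : (z - y) * (z - y⁻¹) = z ^ 2 - (2 + 4 * e) * z + 1 := by
    linear_combination -z * hysum + mul_inv_cancel₀ hy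
  rw [mul_assoc _ (z - y), hx', hy']
  simp only [quartic, eq_intCast, map_add, aeval_sub, map_pow, aeval_X, map_mul, map_ofNat,
    map_intCast, map_one]
  linear_combination (-4 * z ^ 3 + 8 * z ^ 2 - 4 * z) * ha - 16 * z ^ 2 * mul_inv_cancel₀ he

lemma aeval_quartic_eq_prod_of_tau {K : Type*} [Field K] (f : ℝ →+* K) {a : ℤ} {ε τ ω : ℝ}
    (hε : 1 ≤ ε) (ha : (a : ℝ) = ε ^ 2 + (ε ^ 2)⁻¹)
    (hτ : τ = 1 + 2 * (ε ^ 2)⁻¹ + 2 * ε⁻¹ * √(1 + (ε ^ 2)⁻¹))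
    (hω : ω = 1 + 2 * ε ^ 2 + 2 * ε * √(1 + ε ^ 2)) (z : K) :
    aeval z (quartic a) = (z - f τ) * (z - f τ⁻¹) * (z - f ω) * (z - f ω⁻¹) := by
  have hε0 : 0 < ε := by linarith
  obtain ⟨hτ1, hτω⟩ := one_le_tau_and_tau_le_omega hε hτ hω
  simp only [map_inv₀]
  refine aeval_quartic (e := f (ε ^ 2)) ?_ ?_ ?_ ?_ ?_ ?_ z
  · rw [← map_inv₀, ← map_add, ← ha, map_intCast]
  · exact (map_ne_zero f).mpr (by positivity)
  · exact (map_ne_zero f).mpr (by linarith)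
  · exact (map_ne_zero f).mpr (by linarith)
  · rw [← map_inv₀, ← map_inv₀, ← map_add, tau_add_inv hε0 hτ]
    simp [map_ofNat]
  · rw [← map_inv₀, ← map_add, omega_add_inv hω]
    simp [map_ofNat]

lemma norm_le_of_mem_of_one_le_of_le {τ ω : ℝ} (hτ : 1 ≤ τ) (hτω : τ ≤ ω) {z : ℂ}
    (hz : z ∈ ({(τ : ℂ), ((τ⁻¹ : ℝ) : ℂ), (ω : ℂ), ((ω⁻¹ : ℝ) : ℂ)} : Set ℂ)) : ‖z‖ ≤ ω := by
  have hω : 1 ≤ ω := hτ.trans hτω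
  rcases hz with rfl | rfl | rfl | rfl <;> rw [Complex.norm_real, Real.norm_eq_abs]
  · rwa [abs_of_nonneg (by linarith)]
  · rw [abs_of_nonneg (inv_nonneg.mpr (by linarith))]
    exact (inv_le_one_of_one_le₀ hτ).trans hω
  · rw [abs_of_nonneg (by linarith)]
  · rw [abs_of_nonneg (inv_nonneg.mpr (by linarith))]
    exact (inv_le_one_of_one_le₀ hω).trans hω

lemma minpoly_eq_of_natDegree_le {K B : Type*} [Field K] [Ring B] [Algebra K B] {x : B}
    {p : K[X]} (hp : p.Monic) (hx : aeval x p = 0) (hdeg : p.natDegree ≤ (minpoly K x).natDegree) :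
    minpoly K x = p :=
  (eq_of_monic_of_dvd_of_natDegree_le (minpoly.monic ⟨p, hp, hx⟩) hp (minpoly.dvd K x hx) hdeg).symm

/-- Section 5 of the paper: `τ = 1 + 2ε⁻² + 2ε⁻¹√(1 + ε⁻²)` (with `ε = (2+√3)ⁿ`) is
an algebraic integer of degree four over `ℚ`, whose complex conjugates are exactly
`τ, τ⁻¹, ω, ω⁻¹`, where `ω = 1 + 2ε² + 2ε√(1 + ε²)`; in particular `ω` is the house
of `τ`. -/
theorem tau_is_degree_four_with_house_omega (n : ℕ) (hn : 1 ≤ n) (ε τ ω : ℝ)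
    (hε : ε = (2 + Real.sqrt 3) ^ n)
    (hτ : τ = 1 + 2 * (ε ^ 2)⁻¹ + 2 * ε⁻¹ * Real.sqrt (1 + (ε ^ 2)⁻¹))
    (hω : ω = 1 + 2 * ε ^ 2 + 2 * ε * Real.sqrt (1 + ε ^ 2)) :
    IsIntegral ℤ τ ∧ (minpoly ℚ τ).natDegree = 4 ∧
      {z : ℂ | Polynomial.aeval z (minpoly ℚ τ) = 0}
        = {(τ : ℂ), ((τ⁻¹ : ℝ) : ℂ), (ω : ℂ), ((ω⁻¹ : ℝ) : ℂ)} ∧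
      ∀ z : ℂ, Polynomial.aeval z (minpoly ℚ τ) = 0 → ‖z‖ ≤ ω := by
  have hε1 : 1 ≤ ε := hε ▸ one_le_pow₀ (by linarith [Real.sqrt_nonneg 3])
  obtain ⟨a, ha⟩ := exists_intCast_eq_two_add_sqrt_three_pow_add_inv (2 * n)
  rw [pow_mul', ← hε] at ha
  have hroot : aeval τ (quartic a) = 0 := by
    simpa using aeval_quartic_eq_prod_of_tau (RingHom.id ℝ) hε1 ha hτ hω τ
  set P := (quartic a).map (algebraMap ℤ ℚ)
  have hP : P.Monic := (monic_quartic a).map _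
  have hPτ : aeval τ P = 0 := by rwa [aeval_map_algebraMap]
  have hdeg : P.natDegree = 4 := by rw [(monic_quartic a).natDegree_map, natDegree_quartic]
  have hmin : minpoly ℚ τ = P := minpoly_eq_of_natDegree_le hP hPτ
    (hdeg ▸ four_le_natDegree_minpoly_tau hn hε hτ ⟨P, hP, hPτ⟩)
  have hroots : {z : ℂ | aeval z (minpoly ℚ τ) = 0}
      = {(τ : ℂ), ((τ⁻¹ : ℝ) : ℂ), (ω : ℂ), ((ω⁻¹ : ℝ) : ℂ)} := by
    ext z
    rw [Set.mem_ofPred_eq, hmin, aeval_map_algebraMap,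
      aeval_quartic_eq_prod_of_tau Complex.ofRealHom hε1 ha hτ hω]
    simp [sub_eq_zero, or_assoc]
  obtain ⟨hτ1, hτω⟩ := one_le_tau_and_tau_le_omega hε1 hτ hω
  exact ⟨⟨quartic a, monic_quartic a, hroot⟩, hmin ▸ hdeg, hroots,
    fun z hz => norm_le_of_mem_of_one_le_of_le hτ1 hτω (hroots ▸ hz)⟩
end

section
/- For n ≥ 1 set ε_n = (2 + Real.sqrt 3)ⁿ, τ_n = 1 + 2ε_n⁻² + 2ε_n⁻¹·Real.sqrt (1 + ε_n⁻²), and ω_n = 1 + 2ε_n² + 2ε_n·Real.sqrt (1 + ε_n²). Then τ_n > 1 for every n, the sequence τ_n tends to 1, the sequence ω_n tends to infinity, and consequently the sequence of ratios (Real.log ω_n) / (Real.log τ_n) tends to infinity as n → ∞. -/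
/-!
Both sequences are values of `g y = 1 + 2y² + 2y√(1 + y²) = (y + √(1 + y²))² = exp (2 arsinh y)`:
`ω_n = g ε_n` and `τ_n = g ε_n⁻¹`. Hence `log ω_n / log τ_n = arsinh ε_n / arsinh ε_n⁻¹`, whose
numerator tends to `∞` and whose denominator tends to `0` through positive values as `ε_n → ∞`.
-/

open Filter Topology Real

lemma exp_two_mul_arsinh (y : ℝ) :
    exp (2 * arsinh y) = 1 + 2 * y ^ 2 + 2 * y * √(1 + y ^ 2) := by
  have hsq : √(1 + y ^ 2) ^ 2 = 1 + y ^ 2 := Real.sq_sqrt (by positivity)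
  rw [two_mul, exp_add, exp_arsinh]
  linear_combination hsq

lemma tendsto_arsinh_atTop : Tendsto arsinh atTop atTop :=
  arsinh_strictMono.monotone.tendsto_atTop_atTop fun b => ⟨sinh b, (arsinh_sinh b).ge⟩

lemma tendsto_arsinh_inv_atTop_nhdsGT_zero :
    Tendsto (fun x => arsinh x⁻¹) atTop (𝓝[>] 0) := by
  refine tendsto_nhdsWithin_iff.2 ⟨?_, ?_⟩
  · simpa only [arsinh_zero] using tendsto_inv_atTop_zero.arsinh
  · filter_upwards [eventually_gt_atTop 0] with x hx
    exact arsinh_pos_iff.2 (inv_pos.2 hx)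

lemma tendsto_arsinh_div_arsinh_inv_atTop :
    Tendsto (fun x => arsinh x / arsinh x⁻¹) atTop atTop := by
  simpa only [div_eq_mul_inv, Pi.inv_apply] using
    tendsto_arsinh_atTop.atTop_mul_atTop₀
      tendsto_arsinh_inv_atTop_nhdsGT_zero.inv_tendsto_nhdsGT_zero

/-- Section 5 of the paper: with `ε_n = (2+√3)ⁿ`,
`τ_n = 1 + 2ε_n⁻² + 2ε_n⁻¹√(1 + ε_n⁻²)` and `ω_n = 1 + 2ε_n² + 2ε_n√(1 + ε_n²)`,
one has `τ_n > 1`, `τ_n → 1`, `ω_n → ∞`, and hence `log ω_n / log τ_n → ∞`;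
the stretches of the groups `Γₙ` are unbounded. -/
theorem ratio_log_house_tendsto_atTop
    (ε τ ω : ℕ → ℝ)
    (hε : ∀ n, ε n = (2 + Real.sqrt 3) ^ n)
    (hτ : ∀ n, τ n = 1 + 2 * (ε n ^ 2)⁻¹ + 2 * (ε n)⁻¹ * Real.sqrt (1 + (ε n ^ 2)⁻¹))
    (hω : ∀ n, ω n = 1 + 2 * ε n ^ 2 + 2 * ε n * Real.sqrt (1 + ε n ^ 2)) :
    (∀ n, 1 ≤ n → 1 < τ n) ∧
      Tendsto τ atTop (nhds 1) ∧
      Tendsto ω atTop atTop ∧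
      Tendsto (fun n => Real.log (ω n) / Real.log (τ n)) atTop atTop := by
  have hε_pos (n : ℕ) : 0 < ε n := hε n ▸ by positivity
  have hε_top : Tendsto ε atTop atTop := funext hε ▸
    tendsto_pow_atTop_atTop_of_one_lt (by linarith [Real.sqrt_nonneg 3])
  have hτ_exp (n : ℕ) : τ n = exp (2 * arsinh (ε n)⁻¹) := by
    rw [hτ, exp_two_mul_arsinh, inv_pow]
  have hω_exp (n : ℕ) : ω n = exp (2 * arsinh (ε n)) := by
    rw [hω, exp_two_mul_arsinh]
  refine ⟨fun n _ => ?_, ?_, ?_, ?_⟩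
  · rw [hτ_exp, one_lt_exp_iff]
    exact mul_pos two_pos (arsinh_pos_iff.2 (inv_pos.2 (hε_pos n)))
  · simpa [funext hτ_exp, Function.comp_def] using
      ((tendsto_inv_atTop_zero.comp hε_top).arsinh.const_mul 2).rexp
  · simpa only [funext hω_exp, Function.comp_def] using
      tendsto_exp_atTop.comp ((tendsto_arsinh_atTop.const_mul_atTop two_pos).comp hε_top)
  · simpa only [hω_exp, hτ_exp, log_exp, mul_div_mul_left _ _ (two_ne_zero' ℝ),
      Function.comp_def] using
      tendsto_arsinh_div_arsinh_inv_atTop.comp hε_top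
end
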